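/- For every real ε with 0 < ε ≤ 1 there exists a constant C_ε ≥ 1 such that for every integer m ≥ 2 there is a nonempty set Z ⊆ {0, 1, ..., m−1} with disc(Z, m) ≤ ε and |Z| ≤ C_ε · log₂ m. -/

import Mathlib

/-!
Choose `n ≈ (32 / ε²) log m` residues modulo `m` independently and uniformly. For a fixed frequency
`k`, the real and imaginary parts of `∑ⱼ ζ^(k zⱼ)` are sums of `n` mean-zero terms bounded by `1`,
so by the Chernoff bound at most a fraction `4 exp (-ε² n / 16) ≤ 4 / m²` of the samples have
`‖∑ⱼ ζ^(k zⱼ)‖ > ε n`, and at most a fraction `n² / m` have a repeated residue. A union bound over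
the `m - 1` frequencies leaves a good sample of `n` distinct residues as soon as
`m ≫ (log m)² / ε⁴`; for the finitely many smaller `m`, all of `{0, …, m - 1}` has discrepancy `0`.
-/

/-- The `m`-discrepancy of a finite multiset `Z` of integers:
`disc(Z, m) = max_{k = 1, …, m−1} |(1/|Z|) · Σ_{z ∈ Z} exp(2πi·k·z/m)|`,
with the convention `disc(∅, m) = 0`. -/
noncomputable def disc (Z : Multiset ℤ) (m : ℕ) : ℝ :=
  if h : (Finset.Ioo 0 m).Nonempty then
    (Finset.Ioo 0 m).sup' h fun k =>
      ‖(Z.map fun z : ℤ =>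
        Complex.exp (2 * Real.pi * Complex.I * (k : ℂ) * (z : ℂ) / (m : ℂ))).sum‖ / (Z.card : ℝ)
  else 0

open Finset Fintype Real

open Complex in
theorem Complex.exists_re_mul_ge_norm_div_two (z : ℂ) :
    ∃ c ∈ ({1, -1, I, -I} : Finset ℂ), ‖z‖ / 2 ≤ (c * z).re := by
  have h := norm_le_abs_re_add_abs_im z
  rcases le_total (‖z‖ / 2) |z.re| with hre | him
  · rcases le_abs.1 hre with h' | h'
    · exact ⟨1, by simp, by simpa using h'⟩
    · exact ⟨-1, by simp, by simpa using h'⟩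
  · rcases le_abs.1 (show ‖z‖ / 2 ≤ |z.im| by linarith) with h' | h'
    · exact ⟨-I, by simp, by simpa using h'⟩
    · exact ⟨I, by simp, by simpa using h'⟩

section Chernoff

variable {ι α : Type*} [Fintype ι] [Fintype α]

theorem sum_exp_mul_le {g : α → ℝ} (hg : ∀ x, |g x| ≤ 1) (hg0 : ∑ x, g x = 0)
    {t : ℝ} (ht0 : 0 ≤ t) (ht1 : t ≤ 1) :
    ∑ x, exp (t * g x) ≤ card α * exp (t ^ 2) := by
  have hpoint : ∀ x, exp (t * g x) ≤ 1 + t * g x + t ^ 2 := fun x => by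
    have htg : |t * g x| ≤ t := by
      rw [abs_mul, abs_of_nonneg ht0]; exact mul_le_of_le_one_right ht0 (hg x)
    have hsq : (t * g x) ^ 2 ≤ t ^ 2 := by
      rw [← sq_abs]; exact pow_le_pow_left₀ (abs_nonneg _) htg 2
    linarith [(abs_le.1 (abs_exp_sub_one_sub_id_le (htg.trans ht1))).2]
  calc ∑ x, exp (t * g x) ≤ ∑ x, (1 + t * g x + t ^ 2) := sum_le_sum fun x _ => hpoint x
    _ = card α * (1 + t ^ 2) := by
      simp only [sum_add_distrib, ← mul_sum, hg0, sum_const, card_univ, nsmul_eq_mul]; ring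
    _ ≤ card α * exp (t ^ 2) := by gcongr; linarith [add_one_le_exp (t ^ 2)]

theorem card_filter_le_sum_comp_le [DecidableEq ι] {g : α → ℝ} (hg : ∀ x, |g x| ≤ 1)
    (hg0 : ∑ x, g x = 0) {t : ℝ} (ht0 : 0 ≤ t) (ht1 : t ≤ 1) (a : ℝ) :
    (#{f : ι → α | a ≤ ∑ i, g (f i)} : ℝ) ≤
      card α ^ card ι * exp (t ^ 2 * card ι - t * a) := by
  have hmarkov : ∀ f : ι → α, (if a ≤ ∑ i, g (f i) then 1 else 0 : ℝ) ≤
      exp (-(t * a)) * ∏ i, exp (t * g (f i)) := fun f => by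
    rw [← exp_sum, ← exp_add, ← mul_sum]
    split_ifs with h
    · exact one_le_exp (by nlinarith)
    · exact (exp_pos _).le
  calc (#{f : ι → α | a ≤ ∑ i, g (f i)} : ℝ)
      = ∑ f : ι → α, (if a ≤ ∑ i, g (f i) then 1 else 0 : ℝ) := natCast_card_filter _ _
    _ ≤ ∑ f : ι → α, exp (-(t * a)) * ∏ i, exp (t * g (f i)) := sum_le_sum fun f _ => hmarkov f
    _ = exp (-(t * a)) * (∑ x, exp (t * g x)) ^ card ι := by
      rw [← mul_sum, ← card_univ, ← prod_const, Fintype.prod_sum]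
    _ ≤ exp (-(t * a)) * (card α * exp (t ^ 2)) ^ card ι := by
      gcongr
      exact sum_exp_mul_le hg hg0 ht0 ht1
    _ = card α ^ card ι * exp (t ^ 2 * card ι - t * a) := by
      rw [mul_pow, ← exp_nat_mul, mul_left_comm, ← exp_add]; ring_nf

theorem card_filter_lt_norm_sum_comp_le [DecidableEq ι] {w : α → ℂ} (hw : ∀ x, ‖w x‖ ≤ 1)
    (hw0 : ∑ x, w x = 0) {ε : ℝ} (hε0 : 0 ≤ ε) (hε4 : ε ≤ 4) :
    (#{f : ι → α | ε * card ι < ‖∑ i, w (f i)‖} : ℝ) ≤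
      4 * card α ^ card ι * exp (-(ε ^ 2 * card ι / 16)) := by
  classical
  set units : Finset ℂ := {1, -1, Complex.I, -Complex.I}
  have hunits : ∀ c ∈ units, ‖c‖ = 1 := by simp [units]
  have hcover : ({f : ι → α | ε * card ι < ‖∑ i, w (f i)‖} : Finset (ι → α)) ⊆
      units.biUnion fun c => {f : ι → α | ε * card ι / 2 ≤ ∑ i, (c * w (f i)).re} := by
    intro f hf
    obtain ⟨c, hc, hre⟩ := Complex.exists_re_mul_ge_norm_div_two (∑ i, w (f i))
    simp only [mem_biUnion, mem_filter_univ] at hf ⊢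
    refine ⟨c, hc, ?_⟩
    rw [← Complex.re_sum, ← mul_sum]
    linarith
  have hchernoff : ∀ c ∈ units, (#{f : ι → α | ε * card ι / 2 ≤ ∑ i, (c * w (f i)).re} : ℝ) ≤
      card α ^ card ι * exp (-(ε ^ 2 * card ι / 16)) := fun c hc => by
    have hbound : ∀ x, |(c * w x).re| ≤ 1 := fun x =>
      (Complex.abs_re_le_norm _).trans (by rw [norm_mul, hunits c hc, one_mul]; exact hw x)
    have hsum : ∑ x, (c * w x).re = 0 := by
      rw [← Complex.re_sum, ← mul_sum, hw0, mul_zero, Complex.zero_re]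
    convert card_filter_le_sum_comp_le (ι := ι) hbound hsum (t := ε / 4) (by positivity)
      (by linarith) (ε * card ι / 2) using 3
    ring
  calc (#{f : ι → α | ε * card ι < ‖∑ i, w (f i)‖} : ℝ)
      ≤ ∑ c ∈ units, (#{f : ι → α | ε * card ι / 2 ≤ ∑ i, (c * w (f i)).re} : ℝ) := by
        exact_mod_cast (card_le_card hcover).trans card_biUnion_le
    _ ≤ #units * (card α ^ card ι * exp (-(ε ^ 2 * card ι / 16))) := by
        simpa using sum_le_card_nsmul _ _ _ hchernoff
    _ ≤ 4 * card α ^ card ι * exp (-(ε ^ 2 * card ι / 16)) := by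
        rw [mul_assoc]; gcongr; exact_mod_cast card_le_four

end Chernoff

section Collisions

variable {ι α : Type*} [Fintype ι] [Fintype α] [DecidableEq ι] [DecidableEq α]

theorem card_filter_apply_eq_apply_mul_le {i j : ι} (hij : i ≠ j) :
    #{f : ι → α | f i = f j} * card α ≤ card α ^ card ι := by
  calc #{f : ι → α | f i = f j} * card α
      = #(({f : ι → α | f i = f j} : Finset (ι → α)) ×ˢ (univ : Finset α)) := by
        rw [card_product, card_univ]
    _ ≤ #(univ : Finset (ι → α)) := by
        refine card_le_card_of_injOn (fun p => Function.update p.1 j p.2) (by simp) ?_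
        rintro ⟨f, a⟩ hf ⟨g, b⟩ hg hfg
        simp only [coe_product, Set.mem_prod, mem_coe, mem_filter_univ] at hf hg hfg
        have hab : a = b := by simpa using congrFun hfg j
        refine Prod.ext (funext fun x => ?_) hab
        by_cases hx : x = j
        · subst hx
          simpa [hij, ← hf.1, ← hg.1] using congrFun hfg i
        · simpa [hx] using congrFun hfg x
    _ = card α ^ card ι := by rw [card_univ, card_fun]

theorem card_filter_not_injective_mul_le :
    #{f : ι → α | ¬ Function.Injective f} * card α ≤ card ι ^ 2 * card α ^ card ι := by
  have hcover : ({f : ι → α | ¬ Function.Injective f} : Finset (ι → α)) ⊆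
      univ.offDiag.biUnion fun p : ι × ι => {f : ι → α | f p.1 = f p.2} := by
    intro f hf
    obtain ⟨i, j, hfij, hij⟩ := Function.not_injective_iff.1 ((mem_filter_univ f).1 hf)
    exact mem_biUnion.2 ⟨(i, j), by simpa using hij, (mem_filter_univ f).2 hfij⟩
  calc #{f : ι → α | ¬ Function.Injective f} * card α
      ≤ (∑ p ∈ univ.offDiag, #{f : ι → α | f p.1 = f p.2}) * card α := by
        gcongr; exact (card_le_card hcover).trans card_biUnion_le
    _ = ∑ p ∈ univ.offDiag, #{f : ι → α | f p.1 = f p.2} * card α := sum_mul _ _ _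
    _ ≤ ∑ _p ∈ (univ : Finset ι).offDiag, card α ^ card ι :=
        sum_le_sum fun p hp => card_filter_apply_eq_apply_mul_le (mem_offDiag.1 hp).2.2
    _ ≤ card ι ^ 2 * card α ^ card ι := by
        rw [sum_const, smul_eq_mul, offDiag_card, card_univ, sq]
        gcongr
        exact Nat.sub_le _ _

end Collisions

theorem exists_injective_forall_norm_sum_le {ι α κ : Type*} [Fintype ι] [Fintype α]
    (K : Finset κ) (w : κ → α → ℂ) (hw : ∀ k ∈ K, ∀ x, ‖w k x‖ ≤ 1)
    (hw0 : ∀ k ∈ K, ∑ x, w k x = 0) {ε : ℝ} (hε0 : 0 ≤ ε) (hε4 : ε ≤ 4)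
    (hK : 8 * #K * exp (-(ε ^ 2 * card ι / 16)) ≤ 1) (hι : 2 * card ι ^ 2 < card α) :
    ∃ f : ι → α, Function.Injective f ∧ ∀ k ∈ K, ‖∑ i, w k (f i)‖ ≤ ε * card ι := by
  classical
  set large := K.biUnion fun k => {f : ι → α | ε * card ι < ‖∑ i, w k (f i)‖}
  set collide : Finset (ι → α) := {f | ¬ Function.Injective f}
  have hN : (0 : ℝ) < card α ^ card ι := by
    have : 0 < card α := by omega
    positivity
  have hlarge : (#large : ℝ) ≤ card α ^ card ι / 2 :=
    calc (#large : ℝ) ≤ ∑ k ∈ K, (#{f : ι → α | ε * card ι < ‖∑ i, w k (f i)‖} : ℝ) := by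
          exact_mod_cast card_biUnion_le
      _ ≤ #K * (4 * card α ^ card ι * exp (-(ε ^ 2 * card ι / 16))) := by
          simpa using sum_le_card_nsmul _ _ _ fun k hk =>
            card_filter_lt_norm_sum_comp_le (ι := ι) (hw k hk) (hw0 k hk) hε0 hε4
      _ ≤ card α ^ card ι / 2 := by nlinarith
  have hcollide : (#collide : ℝ) < card α ^ card ι / 2 := by
    have hmul : (#collide : ℝ) * card α ≤ card ι ^ 2 * card α ^ card ι := by
      exact_mod_cast card_filter_not_injective_mul_le
    have hι' : 2 * (card ι : ℝ) ^ 2 < card α := by exact_mod_cast hι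
    nlinarith
  have hcard : #(large ∪ collide) < #(univ : Finset (ι → α)) := by
    have hunion : (#(large ∪ collide) : ℝ) ≤ #large + #collide := by
      exact_mod_cast card_union_le _ _
    have : (#(large ∪ collide) : ℝ) < card α ^ card ι := by linarith
    rw [card_univ, card_fun]
    exact_mod_cast this
  obtain ⟨f, -, hf⟩ := exists_mem_notMem_of_card_lt_card hcard
  simp only [large, collide, mem_union, mem_biUnion, mem_filter_univ, not_or, not_exists,
    not_and, not_lt, not_not] at hf
  exact ⟨f, hf.2, hf.1⟩

theorem sum_range_exp_pow_mul_eq_zero {m k : ℕ} (hk : ¬ m ∣ k) :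
    ∑ x ∈ range m, Complex.exp (2 * π * Complex.I / m) ^ (k * x) = 0 := by
  rcases eq_or_ne m 0 with rfl | hm
  · simp
  have hζ := Complex.isPrimitiveRoot_exp m hm
  have hne : Complex.exp (2 * π * Complex.I / m) ^ k ≠ 1 := mt (hζ.pow_eq_one_iff_dvd k).1 hk
  have hpow : (Complex.exp (2 * π * Complex.I / m) ^ k) ^ m = 1 := by
    rw [pow_right_comm, hζ.pow_eq_one, one_pow]
  simp_rw [pow_mul]
  rw [geom_sum_eq hne, hpow, sub_self, zero_div]

theorem disc_map_natCast_le {Z : Finset ℕ} {m : ℕ} {ε : ℝ} (hε : 0 ≤ ε)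
    (h : ∀ k ∈ Ioo 0 m, ‖∑ z ∈ Z, Complex.exp (2 * π * Complex.I / m) ^ (k * z)‖ ≤ ε * #Z) :
    disc (Z.val.map fun z : ℕ => (z : ℤ)) m ≤ ε := by
  have hexp : ∀ k z : ℕ, Complex.exp (2 * π * Complex.I * k * z / m) =
      Complex.exp (2 * π * Complex.I / m) ^ (k * z) := fun k z => by
    rw [← Complex.exp_nat_mul]; push_cast; ring_nf
  unfold disc
  split_ifs
  · refine sup'_le _ _ fun k hk => div_le_of_le_mul₀ (by positivity) hε ?_
    simpa [Multiset.map_map, Function.comp_def, hexp, ← Finset.sum_eq_multiset_sum] using h k hk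
  · exact hε

theorem exists_finset_card_eq_disc_le {m n : ℕ} {ε : ℝ} (hε0 : 0 ≤ ε) (hε4 : ε ≤ 4)
    (hm : 8 * m * exp (-(ε ^ 2 * n / 16)) ≤ 1) (hn : 2 * n ^ 2 < m) :
    ∃ Z : Finset ℕ, Z ⊆ range m ∧ #Z = n ∧ disc (Z.val.map fun z : ℕ => (z : ℤ)) m ≤ ε := by
  set ζ := Complex.exp (2 * π * Complex.I / m)
  have hζ : ‖ζ‖ = 1 := (Complex.isPrimitiveRoot_exp m (by omega)).norm'_eq_one (by omega)
  have hK : 8 * #(Ioo 0 m) * exp (-(ε ^ 2 * card (Fin n) / 16)) ≤ 1 := by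
    refine le_trans ?_ hm
    rw [Fintype.card_fin, Nat.card_Ioo]
    gcongr
    exact_mod_cast Nat.sub_le _ _
  obtain ⟨f, hf, hsum⟩ := exists_injective_forall_norm_sum_le (ι := Fin n) (α := Fin m) (Ioo 0 m)
    (fun k x => ζ ^ (k * (x : ℕ))) (fun k _ x => by rw [norm_pow, hζ, one_pow])
    (fun k hk => by
      rw [Fin.sum_univ_eq_sum_range (fun x => ζ ^ (k * x))]
      exact sum_range_exp_pow_mul_eq_zero (Nat.not_dvd_of_pos_of_lt (mem_Ioo.1 hk).1
        (mem_Ioo.1 hk).2))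
    hε0 hε4 hK (by simpa using hn)
  let e : Fin n ↪ ℕ := ⟨fun i => f i, Fin.val_injective.comp hf⟩
  refine ⟨univ.map e, fun z hz => ?_, by simp, disc_map_natCast_le hε0 fun k hk => ?_⟩
  · obtain ⟨i, -, rfl⟩ := mem_map.1 hz
    exact mem_range.2 (f i).isLt
  · simpa [e] using hsum k hk

theorem eventually_two_mul_sq_mul_log_lt (c : ℝ) :
    ∀ᶠ m : ℕ in Filter.atTop, 2 * (c * log m) ^ 2 < m := by
  have hlim := (tendsto_pow_log_div_mul_add_atTop 1 0 2 one_ne_zero).comp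
    tendsto_natCast_atTop_atTop
  filter_upwards [hlim.eventually (gt_mem_nhds (by positivity : (0 : ℝ) < 1 / (2 * c ^ 2 + 1))),
    Filter.eventually_gt_atTop 0] with m hlt hm
  have hm' : (0 : ℝ) < m := by exact_mod_cast hm
  simp only [Function.comp_apply, one_mul, add_zero] at hlt
  rw [div_lt_div_iff₀ hm' (by positivity)] at hlt
  nlinarith [sq_nonneg (log m)]

-- `n ≥ (32 / ε²) log m` makes the Chernoff bound `exp (-ε² n / 16) ≤ m⁻²` beat the union bound
-- over the `m - 1` frequencies.
theorem exists_finset_card_le_log_disc_le {ε : ℝ} (hε0 : 0 < ε) (hε4 : ε ≤ 4) {m : ℕ}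
    (hm8 : 8 ≤ m) (hm : 2 * ((32 / ε ^ 2 + 1) * log m) ^ 2 < m) :
    ∃ Z : Finset ℕ, Z.Nonempty ∧ Z ⊆ range m ∧ disc (Z.val.map fun z : ℕ => (z : ℤ)) m ≤ ε ∧
      (#Z : ℝ) ≤ (32 / ε ^ 2 + 1) * log m := by
  set n := ⌈32 / ε ^ 2 * log m⌉₊
  have hm8' : (8 : ℝ) ≤ m := by exact_mod_cast hm8
  have hlog : 1 ≤ log m := (le_log_iff_exp_le (by linarith)).2 (by linarith [exp_one_lt_d9])
  have hn_ge : 32 / ε ^ 2 * log m ≤ n := Nat.le_ceil _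
  have hn_le : (n : ℝ) ≤ (32 / ε ^ 2 + 1) * log m := by
    linarith [Nat.ceil_lt_add_one (show 0 ≤ 32 / ε ^ 2 * log m by positivity)]
  have hexp : 8 * m * exp (-(ε ^ 2 * n / 16)) ≤ 1 := by
    have h2log : 2 * log m ≤ ε ^ 2 * n / 16 := by
      have := mul_le_mul_of_nonneg_left hn_ge (sq_nonneg ε)
      rw [← mul_assoc, mul_div_cancel₀ _ (by positivity)] at this
      linarith
    calc 8 * m * exp (-(ε ^ 2 * n / 16)) ≤ 8 * m * exp (-(2 * log m)) := by gcongr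
      _ = 8 / m := by
        rw [exp_neg, ← log_rpow (by linarith), exp_log (by positivity)]
        field_simp; norm_num
      _ ≤ 1 := by rw [div_le_one (by linarith)]; exact hm8'
  have hn2 : 2 * n ^ 2 < m := by
    have : 2 * (n : ℝ) ^ 2 < m := by nlinarith [Nat.cast_nonneg (α := ℝ) n]
    exact_mod_cast this
  obtain ⟨Z, hZm, hZn, hZ⟩ := exists_finset_card_eq_disc_le hε0.le hε4 hexp hn2
  have hn_pos : 0 < n := Nat.ceil_pos.2 (by positivity)
  exact ⟨Z, card_pos.1 (hZn ▸ hn_pos), hZm, hZ, hZn ▸ hn_le⟩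

theorem stmt_10 (ε : ℝ) (hε0 : 0 < ε) (hε1 : ε ≤ 1) :
    ∃ C : ℝ, 1 ≤ C ∧ ∀ m : ℕ, 2 ≤ m →
      ∃ Z : Finset ℕ, Z.Nonempty ∧ Z ⊆ Finset.range m ∧
        disc (Z.val.map fun z : ℕ => (z : ℤ)) m ≤ ε ∧
        (Z.card : ℝ) ≤ C * Real.logb 2 m := by
  set A := 32 / ε ^ 2 + 1
  have hA : 1 ≤ A := le_add_of_nonneg_left (by positivity)
  obtain ⟨N, hN⟩ := Filter.eventually_atTop.1
    ((eventually_two_mul_sq_mul_log_lt A).and (Filter.eventually_ge_atTop 8))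
  refine ⟨max (N : ℝ) A, le_max_of_le_right hA, fun m hm => ?_⟩
  have hm' : (2 : ℝ) ≤ m := by exact_mod_cast hm
  have hlogb : 1 ≤ logb 2 m := (le_logb_iff_rpow_le one_lt_two (by linarith)).2 (by simpa using hm')
  rcases lt_or_ge m N with hmN | hmN
  · refine ⟨range m, nonempty_range_iff.2 (by omega), subset_rfl,
      disc_map_natCast_le hε0.le fun k hk => ?_, ?_⟩
    · rw [sum_range_exp_pow_mul_eq_zero (Nat.not_dvd_of_pos_of_lt (mem_Ioo.1 hk).1
        (mem_Ioo.1 hk).2), norm_zero]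
      positivity
    · rw [card_range]
      calc (m : ℝ) ≤ max (N : ℝ) A := le_max_of_le_left (by exact_mod_cast hmN.le)
        _ ≤ max (N : ℝ) A * logb 2 m := le_mul_of_one_le_right (by positivity) hlogb
  · obtain ⟨Z, hZ, hZm, hdisc, hcard⟩ :=
      exists_finset_card_le_log_disc_le hε0 (by linarith) (hN m hmN).2 (hN m hmN).1
    have hlog : log m ≤ logb 2 m :=
      le_div_self (log_nonneg (by linarith)) (log_pos one_lt_two) (by linarith [log_two_lt_d9])
    refine ⟨Z, hZ, hZm, hdisc, hcard.trans ?_⟩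
    gcongr
    exact le_max_right _ _
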